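/- Fix α, β ∈ (0,1), positive reals a, b, μ, and θ ∈ (π/2, π/(1+α)). For every nonzero complex z with |arg z| < θ, the value g(z) = (z + a·z^{1+α}) / (μ·(1 + b·z^β)) satisfies |g(z)| ≤ M_θ · μ⁻¹ · (|z| + a·|z|^{1+α}) · min{1, b⁻¹·|z|^{−β}}, where M_θ = 1/sin(π − θ). -/

import Mathlib

/-!
Bound the numerator by the triangle inequality. For the denominator, `w = b z^β` satisfies
`Re w = |w| cos (β arg z) ≥ |w| cos θ` since `β |arg z| < θ < π`, and for any such `w` we have
`|1 + w|² - sin²θ ≥ (|w| + cos θ)²` and `|1 + w|² - sin²θ |w|² ≥ (1 + |w| cos θ)²`,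
so `|1 + w| ≥ sin θ · max 1 |w|`; inverting the `max` gives the `min` of the claim.
-/

/-- The symbol `g(z) = (z + a z^{1+α}) / (μ (1 + b z^β))` of the fractional
Oldroyd-B problem. Powers are principal complex powers. -/
noncomputable def oldroydSymbol (a b μ α β : ℝ) (z : ℂ) : ℂ :=
  (z + (a : ℂ) * z ^ ((1 + α : ℝ) : ℂ)) / ((μ : ℂ) * (1 + (b : ℂ) * z ^ ((β : ℝ) : ℂ)))

open Complex
open scoped Real

theorem Complex.sq_norm_one_add (w : ℂ) : ‖1 + w‖ ^ 2 = 1 + 2 * w.re + ‖w‖ ^ 2 := by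
  simp only [Complex.sq_norm, normSq_add, map_one, one_mul, conj_re]
  ring

theorem Complex.abs_sin_mul_max_le_norm_one_add {w : ℂ} {θ : ℝ}
    (hw : ‖w‖ * Real.cos θ ≤ w.re) : |Real.sin θ| * max 1 ‖w‖ ≤ ‖1 + w‖ := by
  have hsq : (|Real.sin θ| * max 1 ‖w‖) ^ 2 ≤ ‖1 + w‖ ^ 2 := by
    rw [sq_norm_one_add, mul_pow, sq_abs]
    have hpyth := Real.sin_sq_add_cos_sq θ
    rcases le_total 1 ‖w‖ with h | h
    · rw [max_eq_right h]
      nlinarith [sq_nonneg (1 + ‖w‖ * Real.cos θ)]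
    · rw [max_eq_left h]
      nlinarith [sq_nonneg (‖w‖ + Real.cos θ)]
  exact (sq_le_sq₀ (by positivity) (norm_nonneg _)).mp hsq

theorem Complex.norm_mul_cos_le_re_ofReal_mul_cpow (z : ℂ) {b β θ : ℝ} (hb : 0 ≤ b)
    (hθ : θ ≤ π) (h : |arg z * β| ≤ θ) :
    ‖(b : ℂ) * z ^ (β : ℂ)‖ * Real.cos θ ≤ ((b : ℂ) * z ^ (β : ℂ)).re := by
  rw [re_ofReal_mul, cpow_ofReal_re, norm_mul, norm_real, norm_cpow_real,
    Real.norm_of_nonneg hb, mul_assoc]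
  gcongr
  rw [← Real.cos_abs (arg z * β)]
  exact Real.cos_le_cos_of_nonneg_of_le_pi (abs_nonneg _) hθ h

theorem inv_max_one_of_pos {K : Type*} [Field K] [LinearOrder K] [IsStrictOrderedRing K]
    {x : K} (hx : 0 < x) : (max 1 x)⁻¹ = min 1 x⁻¹ := by
  rcases le_total 1 x with h | h
  · rw [max_eq_right h, min_eq_right (inv_le_one_of_one_le₀ h)]
  · rw [max_eq_left h, min_eq_left ((one_le_inv₀ hx).mpr h), inv_one]

/-- Estimate (g1) of Lemma 2.1: for `z` in the open sector `Σ_θ`,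
`|g(z)| ≤ M_θ μ⁻¹ (|z| + a|z|^{1+α}) min{1, b⁻¹ |z|^{-β}}` with
`M_θ = 1 / sin (π - θ)`. -/
theorem oldroydSymbol_upper_bound (α β a b μ θ : ℝ)
    (hα : α ∈ Set.Ioo (0 : ℝ) 1) (hβ : β ∈ Set.Ioo (0 : ℝ) 1)
    (ha : 0 < a) (hb : 0 < b) (hμ : 0 < μ)
    (hθ' : θ < Real.pi / (1 + α))
    (z : ℂ) (hz : z ≠ 0) (hargz : |Complex.arg z| < θ) :
    ‖oldroydSymbol a b μ α β z‖ ≤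
      (1 / Real.sin (Real.pi - θ)) * μ⁻¹ *
        (‖z‖ + a * ‖z‖ ^ (1 + α)) *
        min 1 (b⁻¹ * ‖z‖ ^ (-β)) := by
  have hθπ : θ < π := hθ'.trans_le (div_le_self Real.pi_pos.le (by linarith [hα.1]))
  have hsin : 0 < Real.sin θ := Real.sin_pos_of_pos_of_lt_pi ((abs_nonneg _).trans_lt hargz) hθπ
  have hsector : |arg z * β| ≤ θ := by
    rw [abs_mul, abs_of_pos hβ.1]
    nlinarith [abs_nonneg (arg z), hβ.2]
  have hden : Real.sin θ * max 1 (b * ‖z‖ ^ β) ≤ ‖1 + (b : ℂ) * z ^ ((β : ℝ) : ℂ)‖ := by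
    have := abs_sin_mul_max_le_norm_one_add
      (norm_mul_cos_le_re_ofReal_mul_cpow z hb.le hθπ.le hsector)
    rwa [abs_of_pos hsin, norm_mul, norm_real, norm_cpow_real, Real.norm_of_nonneg hb.le] at this
  have hnum : ‖z + (a : ℂ) * z ^ ((1 + α : ℝ) : ℂ)‖ ≤ ‖z‖ + a * ‖z‖ ^ (1 + α) := by
    refine (norm_add_le _ _).trans_eq ?_
    rw [norm_mul, norm_real, norm_cpow_real, Real.norm_of_nonneg ha.le]
  have hbz : 0 < b * ‖z‖ ^ β := by positivity
  calc ‖oldroydSymbol a b μ α β z‖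
      = ‖z + (a : ℂ) * z ^ ((1 + α : ℝ) : ℂ)‖ / (μ * ‖1 + (b : ℂ) * z ^ ((β : ℝ) : ℂ)‖) := by
        rw [oldroydSymbol, norm_div, norm_mul, norm_real, Real.norm_of_nonneg hμ.le]
    _ ≤ (‖z‖ + a * ‖z‖ ^ (1 + α)) / (μ * (Real.sin θ * max 1 (b * ‖z‖ ^ β))) := by gcongr
    _ = _ := by
        rw [Real.sin_pi_sub, Real.rpow_neg (norm_nonneg z), ← mul_inv, ← inv_max_one_of_pos hbz]
        field_simp
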